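/- arXiv:1312.1826 — 7 statements merged into one kernel-verified Lean document; each statement's English description precedes it below -/
import Mathlib

section
/- Let $M_{n,\ell}$ (for $\ell \le n$) be the 0/1 matrix whose rows are indexed by subsets $S \subseteq [n]$ with $|S| \ge \ell$ and whose columns are indexed by all subsets $T \subseteq [n]$, with entry $M_{n,\ell}(S,T) = 1$ if $T \subseteq S$ and $0$ otherwise. Then over any field $\mathbb{F}$, every nonzero $\mathbb{F}$-linear combination of the rows of $M_{n,\ell}$ has at least $2^{\ell}$ nonzero entries. -/
/-!
Write `v = cᵀ M`, so that `v T = ∑_{S ⊇ T} c S`, and pick `S₀` minimal (by cardinality) in the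
support of `c`. Möbius inversion on the supersets gives, for every `A ⊆ S₀`,
`∑_{Y ⊆ S₀ᶜ} (-1)^|Y| v (A ∪ Y) = ∑_{A ⊆ S ⊆ S₀} c S = c S₀ ≠ 0`, so some column `A ∪ Y`
meeting `S₀` in exactly `A` lies in the support of `v`. Distinct `A` give distinct columns,
hence `v` has at least `2^|S₀| ≥ 2^ℓ` nonzero entries.
-/

open Finset Matrix Function

section Powerset
variable {α : Type*} [Fintype α] [DecidableEq α]

theorem sum_powerset_compl_filter_union_subset_neg_one_pow_card (A S T : Finset α) :
    ∑ Y ∈ Sᶜ.powerset with A ∪ Y ⊆ T, (-1 : ℤ) ^ #Y = if A ⊆ T ∧ T ⊆ S then 1 else 0 := by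
  by_cases hA : A ⊆ T
  · have hfilter : {Y ∈ Sᶜ.powerset | A ∪ Y ⊆ T} = (Sᶜ ∩ T).powerset := by
      ext Y
      simp only [mem_filter, mem_powerset, union_subset_iff, hA, true_and, subset_inter_iff]
    simp_rw [hfilter, sum_powerset_neg_one_pow_card, ← disjoint_iff_inter_eq_empty,
      disjoint_compl_left_iff, hA, true_and]
  · rw [filter_false_of_mem fun Y _ hY => hA (union_subset_iff.mp hY).1]
    simp [hA]

theorem two_pow_card_le_card_filter_of_forall_exists_inter_eq {S : Finset α}
    {P : Finset α → Prop} [DecidablePred P] (h : ∀ A ⊆ S, ∃ T, P T ∧ T ∩ S = A) :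
    2 ^ #S ≤ #{T | P T} := by
  rw [← card_powerset]
  refine card_le_card_of_surjOn (· ∩ S) fun A hA => ?_
  obtain ⟨T, hT, rfl⟩ := h A (mem_powerset.mp hA)
  exact ⟨T, by simpa using hT, rfl⟩

end Powerset

theorem exists_ne_zero_forall_subset_eq {α ι R : Type*} [Fintype ι] [Zero R]
    {s : ι → Finset α} {c : ι → R} (hs : Injective s) (hc : c ≠ 0) :
    ∃ i₀, c i₀ ≠ 0 ∧ ∀ i, c i ≠ 0 → s i ⊆ s i₀ → i = i₀ := by
  classical
  obtain ⟨i, hi⟩ := Function.ne_iff.mp hc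
  obtain ⟨i₀, hi₀, hmin⟩ := exists_min_image {i | c i ≠ 0} (fun i => #(s i)) ⟨i, by simpa using hi⟩
  refine ⟨i₀, (mem_filter.mp hi₀).2, fun j hj hsub => hs ?_⟩
  exact eq_of_subset_of_card_le hsub (hmin j (by simpa using hj))

def containmentMatrix {α ι R : Type*} [DecidableEq α] [Semiring R] (s : ι → Finset α) :
    Matrix ι (Finset α) R :=
  of fun i T => if T ⊆ s i then 1 else 0

section ContainmentMatrix
variable {α ι R : Type*} [DecidableEq α] [Fintype ι] [Ring R] (s : ι → Finset α) (c : ι → R)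

theorem vecMul_containmentMatrix_apply (T : Finset α) :
    (c ᵥ* containmentMatrix s) T = ∑ i with T ⊆ s i, c i := by
  simp [vecMul, dotProduct, containmentMatrix, sum_filter]

variable [Fintype α]

theorem sum_powerset_compl_neg_one_pow_card_smul_vecMul_containmentMatrix (A S : Finset α) :
    ∑ Y ∈ Sᶜ.powerset, (-1 : ℤ) ^ #Y • (c ᵥ* containmentMatrix s) (A ∪ Y)
      = ∑ i with A ⊆ s i ∧ s i ⊆ S, c i := by
  simp_rw [vecMul_containmentMatrix_apply, sum_filter, smul_sum, smul_ite, smul_zero]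
  rw [sum_comm]
  refine sum_congr rfl fun i _ => ?_
  rw [← sum_filter, ← sum_smul, sum_powerset_compl_filter_union_subset_neg_one_pow_card, ite_smul,
    one_smul, zero_smul]

theorem sum_powerset_compl_neg_one_pow_card_smul_vecMul_containmentMatrix_of_minimal
    {i₀ : ι} (hmin : ∀ i, c i ≠ 0 → s i ⊆ s i₀ → i = i₀) {A : Finset α} (hA : A ⊆ s i₀) :
    ∑ Y ∈ (s i₀)ᶜ.powerset, (-1 : ℤ) ^ #Y • (c ᵥ* containmentMatrix s) (A ∪ Y) = c i₀ := by
  rw [sum_powerset_compl_neg_one_pow_card_smul_vecMul_containmentMatrix]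
  refine sum_eq_single_of_mem i₀ (by simp [hA]) fun i hi hne => ?_
  by_contra hci
  exact hne (hmin i hci (mem_filter.mp hi).2.2)

open scoped Classical in
theorem exists_two_pow_card_le_card_support_vecMul_containmentMatrix (hs : Injective s)
    (hc : c ≠ 0) : ∃ i, c i ≠ 0 ∧ 2 ^ #(s i) ≤ #{T | (c ᵥ* containmentMatrix s) T ≠ 0} := by
  obtain ⟨i₀, hi₀, hmin⟩ := exists_ne_zero_forall_subset_eq hs hc
  refine ⟨i₀, hi₀, two_pow_card_le_card_filter_of_forall_exists_inter_eq fun A hA => ?_⟩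
  have hsum := sum_powerset_compl_neg_one_pow_card_smul_vecMul_containmentMatrix_of_minimal
    s c hmin hA
  obtain ⟨Y, hY, hne⟩ := exists_ne_zero_of_sum_ne_zero (hsum ▸ hi₀)
  have hYdisj : Disjoint Y (s i₀) := subset_compl_iff_disjoint_right.mp (mem_powerset.mp hY)
  refine ⟨A ∪ Y, fun h => hne (by rw [h, smul_zero]), ?_⟩
  rw [union_inter_distrib_right, inter_eq_left.mpr hA, disjoint_iff_inter_eq_empty.mp hYdisj,
    union_empty]

end ContainmentMatrix

open scoped Classical in
theorem stmt0_general {F : Type*} [Field F] (n ℓ : ℕ)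
    (M : {S : Finset (Fin n) // ℓ ≤ S.card} → Finset (Fin n) → F)
    (hM : ∀ S T, M S T = if T ⊆ S.1 then 1 else 0)
    (c : {S : Finset (Fin n) // ℓ ≤ S.card} → F) (hc : c ≠ 0) :
    2 ^ ℓ ≤ (Finset.univ.filter
      (fun T : Finset (Fin n) => (∑ S, c S * M S T) ≠ 0)).card := by
  have hM' : M = containmentMatrix Subtype.val := by
    ext S T
    simp [hM, containmentMatrix]
  obtain ⟨S, -, hS⟩ :=
    exists_two_pow_card_le_card_support_vecMul_containmentMatrix _ c Subtype.val_injective hc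
  calc 2 ^ ℓ ≤ 2 ^ #S.1 := Nat.pow_le_pow_right two_pos S.2
    _ ≤ _ := hS
    _ = _ := by rw [hM']; rfl

open scoped Classical in
/-- Any nonzero linear combination of the rows of the subset-containment matrix
`M_{n,ℓ}` (rows: subsets of `[n]` of size ≥ ℓ, columns: all subsets of `[n]`,
entry 1 iff the column-set is contained in the row-set) has at least `2^ℓ`
nonzero entries. -/
theorem stmt0 {F : Type*} [Field F] (n ℓ : ℕ) (hℓ : ℓ ≤ n)
    (M : {S : Finset (Fin n) // ℓ ≤ S.card} → Finset (Fin n) → F)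
    (hM : ∀ S T, M S T = if T ⊆ S.1 then 1 else 0)
    (c : {S : Finset (Fin n) // ℓ ≤ S.card} → F) (hc : c ≠ 0) :
    2 ^ ℓ ≤ (Finset.univ.filter
      (fun T : Finset (Fin n) => (∑ S, c S * M S T) ≠ 0)).card :=
  stmt0_general n ℓ M hM c hc
end

section
/- Let $M_{n,\ell}$ be the subset-containment matrix with rows indexed by subsets of $[n]$ of size at least $\ell$ and columns by all subsets of $[n]$, where $M_{n,\ell}(S,T)=1$ iff $T\subseteq S$. If we delete any set of at most $2^{\ell}-1$ columns from $M_{n,\ell}$, then the rows of the resulting matrix are linearly independent over any field $\mathbb{F}$. -/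
/-!
A combination `∑ c S • row S` of rows has `T`-entry `f T = ∑_{S ⊇ T} c S`. If `c ≠ 0`, pick `S₀`
of minimal size with `c S₀ ≠ 0`. For every `A ⊆ S₀`, Möbius inversion over the complement gives
`∑_{X ⊆ S₀ᶜ} (-1)^|X| f (A ∪ X) = ∑_{A ⊆ S ⊆ S₀} c S = c S₀ ≠ 0`, so some `T` with `T ∩ S₀ = A`
has `f T ≠ 0`. Thus `f` has at least `2^|S₀| ≥ 2^ℓ` nonzero entries, and deleting fewer than
`2^ℓ` columns cannot kill them all.
-/

open Finset

namespace Finset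

variable {α M : Type*} [Fintype α] [DecidableEq α] [AddCommGroup M]

def supersetSum (c : Finset α → M) (T : Finset α) : M :=
  ∑ S with T ⊆ S, c S

theorem sum_powerset_compl_neg_one_pow_card_smul (B S : Finset α) (m : M) :
    ∑ X ∈ Bᶜ.powerset with X ⊆ S, (-1 : ℤ) ^ #X • m = if S ⊆ B then m else 0 := by
  have : {X ∈ Bᶜ.powerset | X ⊆ S} = (Bᶜ ∩ S).powerset := by
    ext X; rw [mem_filter, mem_powerset, mem_powerset, subset_inter_iff]
  rw [this, ← sum_smul, sum_powerset_neg_one_pow_card]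
  simp [← disjoint_iff_inter_eq_empty, disjoint_compl_left_iff]

theorem sum_powerset_compl_neg_one_pow_card_smul_supersetSum (c : Finset α → M) (A B : Finset α) :
    ∑ X ∈ Bᶜ.powerset, (-1 : ℤ) ^ #X • supersetSum c (A ∪ X) = ∑ S ∈ Icc A B, c S := by
  have inner (S : Finset α) :
      ∑ X ∈ Bᶜ.powerset, (-1 : ℤ) ^ #X • (if A ∪ X ⊆ S then c S else 0)
        = if A ⊆ S ∧ S ⊆ B then c S else 0 := by
    by_cases hA : A ⊆ S
    · simp only [union_subset_iff, hA, true_and, smul_ite, smul_zero, ← sum_filter]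
      exact sum_powerset_compl_neg_one_pow_card_smul B S (c S)
    · simp [union_subset_iff, hA]
  simp only [supersetSum, sum_filter, smul_sum]
  rw [sum_comm, sum_congr rfl fun S _ => inner S, ← sum_filter]
  congr 1
  ext S
  simp

theorem exists_supersetSum_union_ne_zero {c : Finset α → M} {S₀ : Finset α} (h₀ : c S₀ ≠ 0)
    (hmin : ∀ S ⊂ S₀, c S = 0) {A : Finset α} (hA : A ⊆ S₀) :
    ∃ X ⊆ S₀ᶜ, supersetSum c (A ∪ X) ≠ 0 := by
  by_contra! h
  have hIcc : ∑ S ∈ Icc A S₀, c S = c S₀ :=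
    sum_eq_single_of_mem S₀ (mem_Icc.2 ⟨hA, le_rfl⟩) fun S hS hne =>
      hmin S (ssubset_of_subset_of_ne (mem_Icc.1 hS).2 hne)
  refine h₀ ?_
  rw [← hIcc, ← sum_powerset_compl_neg_one_pow_card_smul_supersetSum]
  exact sum_eq_zero fun X hX => by rw [h X (mem_powerset.1 hX), smul_zero]

theorem two_pow_card_le_card_supersetSum_ne_zero [DecidableEq M] {c : Finset α → M}
    {S₀ : Finset α} (h₀ : c S₀ ≠ 0) (hmin : ∀ S ⊂ S₀, c S = 0) :
    2 ^ #S₀ ≤ #{T | supersetSum c T ≠ 0} := by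
  rw [← card_powerset]
  refine card_le_card_of_surjOn (· ∩ S₀) fun A hA => ?_
  obtain ⟨X, hX, hne⟩ := exists_supersetSum_union_ne_zero h₀ hmin (mem_powerset.1 hA)
  refine ⟨A ∪ X, by simpa using hne, ?_⟩
  show (A ∪ X) ∩ S₀ = A
  rw [union_inter_distrib_right, inter_eq_left.2 (mem_powerset.1 hA),
    disjoint_iff_inter_eq_empty.1 (disjoint_of_subset_left hX disjoint_compl_left), union_empty]

theorem two_pow_le_card_supersetSum_ne_zero [DecidableEq M] {c : Finset α → M} (hc : c ≠ 0)
    {ℓ : ℕ} (hsupp : ∀ S, c S ≠ 0 → ℓ ≤ #S) :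
    2 ^ ℓ ≤ #{T | supersetSum c T ≠ 0} := by
  obtain ⟨S, hS⟩ := Function.ne_iff.1 hc
  obtain ⟨S₀, hS₀, hmin⟩ := exists_min_image {S | c S ≠ 0} card ⟨S, by simpa using hS⟩
  rw [mem_filter] at hS₀
  calc 2 ^ ℓ ≤ 2 ^ #S₀ := Nat.pow_le_pow_right two_pos (hsupp S₀ hS₀.2)
    _ ≤ _ := two_pow_card_le_card_supersetSum_ne_zero hS₀.2 fun S hS => by
      by_contra hne
      exact (card_lt_card hS).not_ge (hmin S (by simpa using hne))

end Finset

theorem stmt1_general {F : Type*} [Field F] (n ℓ : ℕ)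
    (M : {S : Finset (Fin n) // ℓ ≤ S.card} → Finset (Fin n) → F)
    (hM : ∀ S T, M S T = if T ⊆ S.1 then 1 else 0)
    (J : Finset (Finset (Fin n))) (hJ : J.card ≤ 2 ^ ℓ - 1) :
    LinearIndependent F
      (fun (S : {S : Finset (Fin n) // ℓ ≤ S.card})
        (T : {T : Finset (Fin n) // T ∉ J}) => M S T.1) := by
  classical
  rw [Fintype.linearIndependent_iff]
  intro g hg
  set c : Finset (Fin n) → F := fun S => if h : ℓ ≤ #S then g ⟨S, h⟩ else 0
  have hsupp (S : Finset (Fin n)) (hS : c S ≠ 0) : ℓ ≤ #S := by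
    by_contra h
    simp [c, h] at hS
  have hvanish (T : Finset (Fin n)) (hT : T ∉ J) : supersetSum c T = 0 := by
    have hrow := congrFun hg ⟨T, hT⟩
    simp only [Finset.sum_apply, Pi.smul_apply, smul_eq_mul, hM, mul_ite, mul_one, mul_zero,
      Pi.zero_apply] at hrow
    rw [← hrow, supersetSum, sum_filter, ← sum_filter_of_ne (p := fun S => ℓ ≤ #S)]
    · rw [sum_subtype _ fun S => mem_filter_univ S]
      exact sum_congr rfl fun S _ => by simp [c, S.2]
    · exact fun S _ hne => hsupp S fun h => hne (by simp [h])
  have hc : c = 0 := by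
    by_contra hc
    have hJ' : #{T | supersetSum c T ≠ 0} ≤ #J :=
      card_le_card fun T hT => by
        by_contra hTJ
        simp [hvanish T hTJ] at hT
    have hweight := two_pow_le_card_supersetSum_ne_zero hc hsupp
    have hpos := Nat.one_le_two_pow (n := ℓ)
    omega
  intro S
  simpa [c, S.2] using congrFun hc S.1

/-- Deleting at most `2^ℓ - 1` columns from the subset-containment matrix
`M_{n,ℓ}` leaves a matrix whose rows are linearly independent over any field. -/
theorem stmt1 {F : Type*} [Field F] (n ℓ : ℕ) (hℓ : ℓ ≤ n)
    (M : {S : Finset (Fin n) // ℓ ≤ S.card} → Finset (Fin n) → F)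
    (hM : ∀ S T, M S T = if T ⊆ S.1 then 1 else 0)
    (J : Finset (Finset (Fin n))) (hJ : J.card ≤ 2 ^ ℓ - 1) :
    LinearIndependent F
      (fun (S : {S : Finset (Fin n) // ℓ ≤ S.card})
        (T : {T : Finset (Fin n) // T ∉ J}) => M S T.1) :=
  stmt1_general n ℓ M hM J hJ
end

section
/- Let $D(\bar x) = \prod_{i=1}^d D_i(\bar x_i) \in \mathbb{F}^{w\times w}[\bar x]$ be a product of matrix polynomials over disjoint variable sets, such that the constant term $D_{i\mathbf{0}}$ of each $D_i$ is an invertible matrix. Then $D$ has $w^2$-block-support concentration: every coefficient $D_e = \prod_{i=1}^d D_{i e_i}$ of a monomial $\bar x^e$ lies in the $\mathbb{F}$-linear span of the coefficients $D_f$ of monomials $\bar x^f$ with block-support $\mathrm{bS}(f) \subset \mathrm{bS}(e)$ (when $\mathrm{bs}(e) \ge w^2$) and $\mathrm{bs}(f) \le w^2 - 1$. -/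
/-!
Let `x i = Dᵢ(eᵢ)`, `u i = Dᵢ(0)`, and for a cut point `c` put
`a c = (∏_{i<c} x i) (∏_{i<c} u i)⁻¹` and `b c = (∏_{i<c} u i) (∏_{i≥c} x i)`, so that
`a c * b c = D_e` for every `c`, while for `t < m` the product `a t * b m` is the coefficient
`D_f` where `f` is `e` with the blocks in `[t, m)` set to zero. Taking as cut points the positions
in `bS(e)` together with `d`, there are `bs(e) + 1 > w²` matrices `a c`, hence a linear
relation among them; multiplying it on the right by `b m` for the largest `m` occurring in it writes
`D_e` as a combination of the `D_f` with `t < m`, and `bS(f) ⊂ bS(e)` because `t ∈ bS(e)`.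
Iterating on the supports that are still of size at least `w²` gives the theorem.
-/

namespace List

section FinRange

variable {α : Type*} {d : ℕ} {g h : Fin d → α}

theorem take_map_finRange_congr {a : ℕ} (hgh : ∀ i : Fin d, ↑i < a → g i = h i) :
    ((finRange d).map g).take a = ((finRange d).map h).take a :=
  ext_getElem (by simp) fun j h₁ _ => by
    simp only [getElem_take, getElem_map, getElem_finRange]
    exact hgh _ (by simp at h₁; simp; omega)

theorem drop_map_finRange_congr {b : ℕ} (hgh : ∀ i : Fin d, b ≤ ↑i → g i = h i) :
    ((finRange d).map g).drop b = ((finRange d).map h).drop b :=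
  ext_getElem (by simp) fun j _ _ => by
    simp only [getElem_drop, getElem_map, getElem_finRange]
    exact hgh _ (by simp)

theorem drop_take_map_finRange_congr {a b : ℕ}
    (hgh : ∀ i : Fin d, a ≤ ↑i → ↑i < b → g i = h i) :
    (((finRange d).map g).take b).drop a = (((finRange d).map h).take b).drop a :=
  ext_getElem (by simp) fun j h₁ _ => by
    simp only [getElem_drop, getElem_take, getElem_map, getElem_finRange]
    exact hgh _ (by simp) (by simp at h₁; simp; omega)

end FinRange

variable {M : Type*} [Monoid M] {d : ℕ}

theorem prod_eq_prod_take_mul_prod_drop_take_mul_prod_drop (l : List M) {a b : ℕ}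
    (hab : a ≤ b) :
    l.prod = (l.take a).prod * ((l.take b).drop a).prod * (l.drop b).prod := by
  rw [← prod_take_mul_prod_drop l b, ← prod_take_mul_prod_drop (l.take b) a, take_take,
    min_eq_left hab]

theorem prod_map_finRange_ite_Ico (x u : Fin d → M) {a b : ℕ} (hab : a ≤ b) {v : M}
    (hv : v * (((finRange d).map u).take a).prod = 1) :
    ((finRange d).map fun i : Fin d => if a ≤ (i : ℕ) ∧ (i : ℕ) < b then u i else x i).prod =
      (((finRange d).map x).take a).prod * v *
        ((((finRange d).map u).take b).prod * (((finRange d).map x).drop b).prod) := by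
  rw [prod_eq_prod_take_mul_prod_drop_take_mul_prod_drop _ hab,
    take_map_finRange_congr fun i hi => if_neg (by omega),
    drop_take_map_finRange_congr (h := u) fun i ha hb => if_pos ⟨ha, hb⟩,
    drop_map_finRange_congr fun i hi => if_neg (by omega),
    ← prod_take_mul_prod_drop (((finRange d).map u).take b) a, take_take, min_eq_left hab]
  simp only [mul_assoc, ← mul_assoc v, hv, one_mul]

end List

open Finset in
theorem Finset.filter_ite_ne_zero_ssubset {ι : Type*} [Fintype ι] {β : ι → Type*}
    [∀ i, Zero (β i)] [∀ i, DecidableEq (β i)] (e : ∀ i, β i) (p : ι → Prop) [DecidablePred p]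
    {i₀ : ι} (hp : p i₀) (he : e i₀ ≠ 0) :
    univ.filter (fun i => (if p i then 0 else e i) ≠ 0) ⊂ univ.filter (fun i => e i ≠ 0) := by
  refine (ssubset_iff_of_subset fun i => ?_).mpr ⟨i₀, ?_, ?_⟩
  all_goals simp only [mem_filter, mem_univ, true_and]
  · split_ifs <;> simp_all
  · exact he
  · simp [hp]

theorem Submodule.mem_span_of_forall_mem_span_ssubset {R V κ ι : Type*} [Semiring R]
    [AddCommMonoid V] [Module R V] (g : κ → V) (s : κ → Finset ι) (r : ℕ)
    (hstep : ∀ e, r ≤ (s e).card → g e ∈ span R {v | ∃ f, s f ⊂ s e ∧ v = g f})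
    (e : κ) (he : r ≤ (s e).card) :
    g e ∈ span R {v | ∃ f, s f ⊂ s e ∧ (s f).card < r ∧ v = g f} := by
  induction hN : (s e).card using Nat.strong_induction_on generalizing e with
  | _ N ih =>
    refine span_le.mpr ?_ (hstep e he)
    rintro _ ⟨f, hfe, rfl⟩
    by_cases hf : (s f).card < r
    · exact subset_span ⟨f, hfe, hf, rfl⟩
    · refine span_mono ?_ (ih _ (hN ▸ Finset.card_lt_card hfe) f (not_lt.mp hf) rfl)
      rintro _ ⟨f', hf'f, hf', rfl⟩
      exact ⟨f', hf'f.trans hfe, hf', rfl⟩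

open Module

theorem Submodule.mem_span_mul_of_finrank_lt_card {F A ι : Type*} [Field F] [Ring A]
    [Algebra F A] [FiniteDimensional F A] [Fintype ι] [LinearOrder ι]
    (hcard : finrank F A < Fintype.card ι) {a b : ι → A} {y : A} (hy : ∀ m, a m * b m = y) :
    y ∈ span F {z | ∃ t m, t < m ∧ a t * b m = z} := by
  classical
  have hdep : ¬ LinearIndependent F a := fun h => hcard.not_ge h.fintype_card_le_finrank
  obtain ⟨c, hc, t₀, ht₀⟩ := Fintype.not_linearIndependent_iff.mp hdep
  obtain ⟨m, hm, hmax⟩ := Finset.exists_max_image ({t | c t ≠ 0} : Finset ι) id ⟨t₀, by simpa⟩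
  have hcm : c m ≠ 0 := by simpa using hm
  have hrel : c m • y = -∑ t ∈ Finset.univ.erase m, c t • (a t * b m) := by
    rw [eq_neg_iff_add_eq_zero, ← hy m,
      Finset.add_sum_erase _ (fun t => c t • (a t * b m)) (Finset.mem_univ m)]
    simp only [← smul_mul_assoc, ← Finset.sum_mul, hc, zero_mul]
  refine (smul_mem_iff _ hcm).mp (hrel ▸ neg_mem (sum_mem fun t ht => ?_))
  by_cases hct : c t = 0
  · simp [hct]
  · have htm : t < m := lt_of_le_of_ne (hmax t (by simpa)) (Finset.ne_of_mem_erase ht)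
    exact smul_mem _ _ (subset_span ⟨t, m, htm, rfl⟩)

open Finset List

theorem prod_map_finRange_mem_span_support_ssubset {F A : Type*} [Field F] [Ring A]
    [Algebra F A] [FiniteDimensional F A] {d : ℕ} {β : Fin d → Type*} [∀ i, Zero (β i)]
    [∀ i, DecidableEq (β i)]
    (D : ∀ i, β i → A) (hD : ∀ i, IsUnit (D i 0)) (e : ∀ i, β i)
    (he : finrank F A ≤ (univ.filter fun i => e i ≠ 0).card) :
    ((finRange d).map fun i => D i (e i)).prod ∈ Submodule.span F {v | ∃ f : ∀ i, β i,
      (univ.filter fun i => f i ≠ 0) ⊂ (univ.filter fun i => e i ≠ 0) ∧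
        v = ((finRange d).map fun i => D i (f i)).prod} := by
  set S := univ.filter fun i => e i ≠ 0
  set x : Fin d → A := fun i => D i (e i)
  set u : Fin d → A := fun i => D i 0
  have hu : ∀ c, IsUnit (((finRange d).map u).take c).prod := fun c =>
    prod_isUnit fun _ hm => by
      obtain ⟨i, -, rfl⟩ := mem_map.mp (mem_of_mem_take hm)
      exact hD i
  set a : ℕ → A := fun c =>
    (((finRange d).map x).take c).prod * Ring.inverse (((finRange d).map u).take c).prod
  set b : ℕ → A := fun c =>
    (((finRange d).map u).take c).prod * (((finRange d).map x).drop c).prod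
  have hab : ∀ t m, t ≤ m → a t * b m =
      ((finRange d).map fun i : Fin d => if t ≤ (i : ℕ) ∧ (i : ℕ) < m then u i else x i).prod :=
    fun t m htm => (prod_map_finRange_ite_Ico x u htm (Ring.inverse_mul_cancel _ (hu t))).symm
  set T : Finset ℕ := insert d (S.image Fin.val)
  have hT : Fintype.card T = S.card + 1 := by
    rw [Fintype.card_coe, card_insert_of_notMem (by simpa using fun i _ => i.isLt.ne),
      card_image_of_injective _ Fin.val_injective]
  have hspan := Submodule.mem_span_mul_of_finrank_lt_card
    (by rw [hT]; exact Nat.lt_succ_of_le he)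
    (a := fun c : T => a c) (b := fun c : T => b c) (y := ((finRange d).map x).prod)
    fun m => by
      rw [hab m m le_rfl]
      exact congrArg _ (map_congr_left fun i _ => if_neg (by omega))
  refine Submodule.span_mono ?_ hspan
  rintro _ ⟨⟨t, ht⟩, ⟨m, hm⟩, htm, rfl⟩
  have htm : t < m := htm
  have hmd : m ≤ d := by
    rcases mem_insert.mp hm with rfl | hm
    · exact le_rfl
    · obtain ⟨i, -, rfl⟩ := mem_image.mp hm
      exact i.isLt.le
  obtain ⟨i₀, hi₀, rfl⟩ : ∃ i₀ ∈ S, (i₀ : ℕ) = t := by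
    simpa [T, (htm.trans_le hmd).ne] using ht
  refine ⟨fun i => if i₀ ≤ (i : ℕ) ∧ (i : ℕ) < m then 0 else e i,
    filter_ite_ne_zero_ssubset e _ ⟨le_rfl, htm⟩ (Finset.mem_filter.mp hi₀).2, ?_⟩
  rw [hab _ _ htm.le]
  exact congrArg _ (map_congr_left fun i _ => (apply_ite (D i) _ _ _).symm)

/-- `w²`-block-support concentration: for a product `D = ∏ᵢ Dᵢ(x̄ᵢ)` of matrix
polynomials over disjoint variable blocks whose constant terms `Dᵢ(0)` are all
invertible, every coefficient `D_e = ∏ᵢ Dᵢ(eᵢ)` of a monomial with block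
support of size at least `w²` lies in the `F`-span of coefficients `D_f` of
monomials with `bS(f) ⊂ bS(e)` and `bs(f) ≤ w² - 1`. -/
theorem stmt9 {F : Type*} [Field F] (w d : ℕ) (n : Fin d → ℕ)
    (Di : ∀ i : Fin d, ((Fin (n i)) →₀ ℕ) → Matrix (Fin w) (Fin w) F)
    (hinv : ∀ i, IsUnit (Di i 0)) :
    ∀ e : ∀ i : Fin d, (Fin (n i)) →₀ ℕ,
      w ^ 2 ≤ (Finset.univ.filter (fun i => e i ≠ 0)).card →
      (((List.finRange d).map (fun i => Di i (e i))).prod) ∈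
        Submodule.span F {v : Matrix (Fin w) (Fin w) F |
          ∃ f : ∀ i : Fin d, (Fin (n i)) →₀ ℕ,
            (Finset.univ.filter (fun i => f i ≠ 0)) ⊂
              (Finset.univ.filter (fun i => e i ≠ 0)) ∧
            (Finset.univ.filter (fun i => f i ≠ 0)).card ≤ w ^ 2 - 1 ∧
            v = ((List.finRange d).map (fun i => Di i (f i))).prod} := by
  have hrank : finrank F (Matrix (Fin w) (Fin w) F) = w ^ 2 := by
    simp [Module.finrank_matrix, sq]
  intro e he
  have hdescent := Submodule.mem_span_of_forall_mem_span_ssubset (R := F)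
    (fun f : ∀ i, Fin (n i) →₀ ℕ => ((finRange d).map fun i => Di i (f i)).prod)
    (fun f => univ.filter fun i => f i ≠ 0) (w ^ 2)
    (fun f hf => prod_map_finRange_mem_span_support_ssubset Di hinv f (hrank.trans_le hf)) e he
  refine Submodule.span_mono ?_ hdescent
  rintro _ ⟨f, hfe, hf, rfl⟩
  exact ⟨f, hfe, Nat.le_sub_one_of_lt hf, rfl⟩
end

section
/- Let $D(\bar x) = \prod_{i=1}^d D_i(\bar x_i) \in \mathbb{F}^{w\times w}[\bar x]$ be a product over disjoint variable sets with each constant term $D_{i\mathbf{0}}$ invertible. Suppose $D$ has $\ell$-block-support concentration (every coefficient is in the span of coefficients of monomials with block-support size at most $\ell-1$) and each $D_i$ has $\ell'$-support concentration (every coefficient $D_{ie_i}$ is in the span of coefficients $D_{ig_i}$ with $\mathrm{s}(g_i) \le \ell'-1$). Then $D$ has $((\ell-1)(\ell'-1)+1)$-support concentration: every coefficient of $D$ is in the $\mathbb{F}$-span of coefficients of monomials of support size at most $(\ell-1)(\ell'-1)$. -/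
/-! The block-support concentration of `D` reduces every coefficient to products
`∏ᵢ Dᵢ(fᵢ)` with at most `ℓ - 1` nonzero blocks `fᵢ`. Expanding each factor with a
nonzero `fᵢ` by the support concentration of `Dᵢ` (and keeping `Dᵢ(0)` as it is) writes
such a product as a combination of products `∏ᵢ Dᵢ(gᵢ)` in which at most `ℓ - 1` blocks
contribute, each with support at most `ℓ' - 1`. -/

open Finset
open scoped Pointwise

theorem Finset.sum_le_card_filter_nsmul {ι N : Type*} [AddCommMonoid N] [Preorder N]
    [AddLeftMono N] {s : Finset ι} {c : ι → N} {p : ι → Prop} [DecidablePred p] {k : N}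
    (hp : ∀ i ∈ s, c i ≠ 0 → p i) (hk : ∀ i ∈ s, c i ≤ k) :
    ∑ i ∈ s, c i ≤ #(s.filter p) • k := by
  rw [← Finset.sum_filter_of_ne hp]
  exact Finset.sum_le_card_nsmul _ _ _ fun i hi => hk i (Finset.mem_filter.mp hi).1

theorem Submodule.list_prod_ofFn_mem_span {R A : Type*} [CommSemiring R] [Semiring A]
    [Algebra R A] {n : ℕ} {a : Fin n → A} {s : Fin n → Set A}
    (h : ∀ i, a i ∈ Submodule.span R (s i)) :
    (List.ofFn a).prod ∈ Submodule.span R (List.ofFn s).prod := by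
  induction n with
  | zero => exact Submodule.subset_span rfl
  | succ n ih =>
    simp only [List.ofFn_succ, List.prod_cons]
    rw [← Submodule.span_mul_span]
    exact Submodule.mul_mem_mul (h 0) (ih fun i => h i.succ)

theorem stmt10_general {F : Type*} [Field F] (w d ℓ ℓ' : ℕ) (n : Fin d → ℕ)
    (Di : ∀ i : Fin d, ((Fin (n i)) →₀ ℕ) → Matrix (Fin w) (Fin w) F)
    (hblock : ∀ e : ∀ i : Fin d, (Fin (n i)) →₀ ℕ,
      (((List.finRange d).map (fun i => Di i (e i))).prod) ∈
        Submodule.span F {v : Matrix (Fin w) (Fin w) F |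
          ∃ f : ∀ i : Fin d, (Fin (n i)) →₀ ℕ,
            (Finset.univ.filter (fun i => f i ≠ 0)).card ≤ ℓ - 1 ∧
            v = ((List.finRange d).map (fun i => Di i (f i))).prod})
    (hfac : ∀ (i : Fin d) (ei : (Fin (n i)) →₀ ℕ),
      Di i ei ∈ Submodule.span F {v : Matrix (Fin w) (Fin w) F |
        ∃ gi : (Fin (n i)) →₀ ℕ, gi.support.card ≤ ℓ' - 1 ∧ v = Di i gi}) :
    ∀ e : ∀ i : Fin d, (Fin (n i)) →₀ ℕ,
      (((List.finRange d).map (fun i => Di i (e i))).prod) ∈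
        Submodule.span F {v : Matrix (Fin w) (Fin w) F |
          ∃ g : ∀ i : Fin d, (Fin (n i)) →₀ ℕ,
            (∑ i, (g i).support.card) ≤ (ℓ - 1) * (ℓ' - 1) ∧
            v = ((List.finRange d).map (fun i => Di i (g i))).prod} := by
  classical
  simp only [← List.ofFn_eq_map] at hblock ⊢
  intro e
  refine Submodule.span_le.mpr ?_ (hblock e)
  rintro _ ⟨f, hf, rfl⟩
  let S i := Di i '' {g | g.support.card ≤ ℓ' - 1 ∧ (f i = 0 → g = 0)}
  have hS i : Di i (f i) ∈ Submodule.span F (S i) := by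
    by_cases hfi : f i = 0
    · exact Submodule.subset_span ⟨0, by simp [hfi]⟩
    · refine Submodule.span_mono ?_ (hfac i (f i))
      rintro _ ⟨g, hg, rfl⟩
      exact ⟨g, ⟨hg, fun h => absurd h hfi⟩, rfl⟩
  refine Submodule.span_le.mpr ?_ (Submodule.list_prod_ofFn_mem_span hS)
  intro _ hx
  obtain ⟨b, rfl⟩ := Set.mem_prod_list_ofFn.mp hx
  choose g hg hgb using fun i => (b i).2
  refine Submodule.subset_span ⟨g, ?_, by simp only [hgb]⟩
  calc ∑ i, (g i).support.card ≤ #{i | f i ≠ 0} • (ℓ' - 1) :=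
        Finset.sum_le_card_filter_nsmul
          (fun i _ hne hfi => hne (by simp [(hg i).2 hfi])) (fun i _ => (hg i).1)
    _ ≤ (ℓ - 1) * (ℓ' - 1) := Nat.mul_le_mul_right _ hf

/-- Composition: if the product `D = ∏ᵢ Dᵢ(x̄ᵢ)` (disjoint variable blocks,
invertible constant terms) has `ℓ`-block-support concentration and each factor
`Dᵢ` has `ℓ'`-support concentration, then `D` has
`((ℓ-1)(ℓ'-1)+1)`-support concentration: every coefficient lies in the span of
coefficients of monomials of total support at most `(ℓ-1)(ℓ'-1)`. -/
theorem stmt10 {F : Type*} [Field F] (w d ℓ ℓ' : ℕ) (n : Fin d → ℕ)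
    (Di : ∀ i : Fin d, ((Fin (n i)) →₀ ℕ) → Matrix (Fin w) (Fin w) F)
    (hinv : ∀ i, IsUnit (Di i 0))
    (hblock : ∀ e : ∀ i : Fin d, (Fin (n i)) →₀ ℕ,
      (((List.finRange d).map (fun i => Di i (e i))).prod) ∈
        Submodule.span F {v : Matrix (Fin w) (Fin w) F |
          ∃ f : ∀ i : Fin d, (Fin (n i)) →₀ ℕ,
            (Finset.univ.filter (fun i => f i ≠ 0)).card ≤ ℓ - 1 ∧
            v = ((List.finRange d).map (fun i => Di i (f i))).prod})
    (hfac : ∀ (i : Fin d) (ei : (Fin (n i)) →₀ ℕ),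
      Di i ei ∈ Submodule.span F {v : Matrix (Fin w) (Fin w) F |
        ∃ gi : (Fin (n i)) →₀ ℕ, gi.support.card ≤ ℓ' - 1 ∧ v = Di i gi}) :
    ∀ e : ∀ i : Fin d, (Fin (n i)) →₀ ℕ,
      (((List.finRange d).map (fun i => Di i (e i))).prod) ∈
        Submodule.span F {v : Matrix (Fin w) (Fin w) F |
          ∃ g : ∀ i : Fin d, (Fin (n i)) →₀ ℕ,
            (∑ i, (g i).support.card) ≤ (ℓ - 1) * (ℓ' - 1) ∧
            v = ((List.finRange d).map (fun i => Di i (g i))).prod} :=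
  stmt10_general w d ℓ ℓ' n Di hblock hfac
end

section
/- Let $A$ be a set of $a$ monomials in $n$ variables with individual degrees at most $d$. Map each monomial via the Kronecker substitution $t_i \mapsto t^{(d+1)^{i-1}}$, obtaining degrees $d_1,\dots,d_a$ in $t$, which are pairwise distinct. Then for $N := n d a^2 \log(d+1)$, among the first $N$ primes there exists a prime $p$ such that the residues $d_1 \bmod p, \dots, d_a \bmod p$ are pairwise distinct. -/
/-!
The Kronecker degree of a monomial with exponents `< d + 1` is its base-`(d + 1)` expansion,
hence injective with values `< (d + 1) ^ n`. If every one of the first `N` primes identified two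
of the degrees modulo itself, each would divide the nonzero product `P` of all pairwise
differences, and then so would their product, which is at least `2 ^ N`. But
`P ≤ ((d + 1) ^ n) ^ (a ^ 2 - a) < 2 ^ N`.
-/

open Finset

theorem sum_mul_pow_lt_pow {b n : ℕ} {e : Fin n → ℕ} (he : ∀ i, e i < b) :
    ∑ i, e i * b ^ (i : ℕ) < b ^ n := by
  simpa [finFunctionFinEquiv_apply] using (finFunctionFinEquiv fun i ↦ (⟨e i, he i⟩ : Fin b)).isLt

theorem injOn_sum_mul_pow (b n : ℕ) :
    Set.InjOn (fun e : Fin n → ℕ ↦ ∑ i, e i * b ^ (i : ℕ)) {e | ∀ i, e i < b} := by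
  intro e he e' he' h
  have key : (fun i ↦ (⟨e i, he i⟩ : Fin b)) = fun i ↦ ⟨e' i, he' i⟩ :=
    finFunctionFinEquiv.injective (Fin.ext (by simpa [finFunctionFinEquiv_apply] using h))
  funext i
  simpa using congrFun key i

theorem two_pow_le_of_forall_nth_prime_dvd {N P : ℕ} (hP : P ≠ 0)
    (h : ∀ j < N, Nat.nth Nat.Prime j ∣ P) : 2 ^ N ≤ P := by
  have hinj : Set.InjOn (Nat.nth Nat.Prime) (range N) :=
    (Nat.nth_injective Nat.infinite_setOfPred_prime).injOn
  have hdvd : ∏ p ∈ (range N).image (Nat.nth Nat.Prime), p ∣ P := by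
    refine prod_primes_dvd P ?_ ?_ <;> simp only [mem_image, mem_range] <;> rintro _ ⟨j, hj, rfl⟩
    · exact (Nat.prime_nth_prime j).prime
    · exact h j hj
  rw [prod_image hinj] at hdvd
  calc 2 ^ N = 2 ^ #(range N) := by rw [card_range]
    _ ≤ ∏ j ∈ range N, Nat.nth Nat.Prime j :=
      pow_card_le_prod _ _ _ fun j _ ↦ (Nat.prime_nth_prime j).two_le
    _ ≤ P := Nat.le_of_dvd (Nat.pos_of_ne_zero hP) hdvd

theorem exists_lt_forall_mod_nth_prime_ne {ι : Type*} {A : Finset ι} {f : ι → ℕ}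
    (hf : Set.InjOn f A) {N : ℕ}
    (hN : ∏ p ∈ A.offDiag, ((f p.1 : ℤ) - f p.2).natAbs < 2 ^ N) :
    ∃ j < N, ∀ x ∈ A, ∀ y ∈ A, x ≠ y → f x % Nat.nth Nat.Prime j ≠ f y % Nat.nth Nat.Prime j := by
  by_contra! hbad
  refine hN.not_ge (two_pow_le_of_forall_nth_prime_dvd ?_ fun j hj ↦ ?_)
  · refine prod_ne_zero_iff.2 fun p hp ↦ ?_
    obtain ⟨hx, hy, hxy⟩ := mem_offDiag.1 hp
    have : f p.1 ≠ f p.2 := fun h ↦ hxy (hf hx hy h)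
    omega
  · obtain ⟨x, hx, y, hy, hxy, hmod⟩ := hbad j hj
    have : Nat.nth Nat.Prime j ∣ ((f (y, x).1 : ℤ) - f (y, x).2).natAbs :=
      Int.natCast_dvd.1 (Nat.modEq_iff_dvd.1 hmod)
    exact this.trans (dvd_prod_of_mem _ (mem_offDiag.2 ⟨hy, hx, hxy.symm⟩))

theorem prod_offDiag_natAbs_sub_le {ι : Type*} {A : Finset ι} {f : ι → ℕ} {B : ℕ}
    (hf : ∀ x ∈ A, f x < B) :
    ∏ p ∈ A.offDiag, ((f p.1 : ℤ) - f p.2).natAbs ≤ B ^ #A.offDiag := by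
  refine prod_le_pow_card _ _ _ fun p hp ↦ ?_
  obtain ⟨hx, hy, -⟩ := mem_offDiag.1 hp
  have := hf _ hx
  have := hf _ hy
  omega

/-- Kronecker substitution and prime modular separation: the Kronecker degrees
`deg e = ∑ᵢ eᵢ (d+1)^i` of a set `A` of `n`-variate monomials with individual
degrees at most `d` are pairwise distinct, and among the first
`N = n·d·|A|²·⌈log₂(d+1)⌉` primes there is one modulo which they remain
pairwise distinct. -/
theorem stmt14 (n d : ℕ) (hn : 0 < n) (hd : 0 < d)
    (A : Finset (Fin n → ℕ)) (hA : A.Nonempty)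
    (hdeg : ∀ e ∈ A, ∀ i, e i ≤ d)
    (deg : (Fin n → ℕ) → ℕ)
    (hdegdef : ∀ e, deg e = ∑ i, e i * (d + 1) ^ (i : ℕ)) :
    (∀ e₁ ∈ A, ∀ e₂ ∈ A, deg e₁ = deg e₂ → e₁ = e₂) ∧
    ∃ j < n * d * A.card ^ 2 * Nat.clog 2 (d + 1),
      (Nat.nth Nat.Prime j).Prime ∧
      ∀ e₁ ∈ A, ∀ e₂ ∈ A, e₁ ≠ e₂ →
        deg e₁ % Nat.nth Nat.Prime j ≠ deg e₂ % Nat.nth Nat.Prime j := by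
  have hlt : ∀ e ∈ A, ∀ i, e i < d + 1 := fun e he i ↦ Nat.lt_succ_of_le (hdeg e he i)
  have hinj : Set.InjOn deg A := by
    rw [show deg = _ from funext hdegdef]
    exact (injOn_sum_mul_pow (d + 1) n).mono hlt
  refine ⟨fun e₁ h₁ e₂ h₂ h ↦ hinj h₁ h₂ h, ?_⟩
  set c := Nat.clog 2 (d + 1)
  have hc : 0 < c := Nat.clog_pos one_lt_two (by omega)
  have hoff : #A.offDiag < #A ^ 2 := by
    rw [offDiag_card, sq]
    exact Nat.sub_lt (Nat.mul_pos hA.card_pos hA.card_pos) hA.card_pos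
  have hbound : ∏ p ∈ A.offDiag, ((deg p.1 : ℤ) - deg p.2).natAbs < 2 ^ (n * d * #A ^ 2 * c) :=
    calc _ ≤ ((d + 1) ^ n) ^ #A.offDiag :=
          prod_offDiag_natAbs_sub_le fun e he ↦ hdegdef e ▸ sum_mul_pow_lt_pow (hlt e he)
      _ ≤ ((2 ^ c) ^ n) ^ #A.offDiag := by gcongr; exact Nat.le_pow_clog one_lt_two _
      _ = 2 ^ (c * n * #A.offDiag) := by rw [← pow_mul, ← pow_mul, mul_assoc]
      _ < 2 ^ (c * n * #A ^ 2) := by gcongr; norm_num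
      _ ≤ 2 ^ (n * d * #A ^ 2 * c) := Nat.pow_le_pow_right two_pos <| by
        rw [show c * n * #A ^ 2 = n * 1 * #A ^ 2 * c by ring]
        gcongr
        omega
  obtain ⟨j, hj, hsep⟩ := exists_lt_forall_mod_nth_prime_ne hinj hbound
  exact ⟨j, hj, Nat.prime_nth_prime j, hsep⟩
end

section
/- Let $\P_1, \P_2$ be any two partitions of $[n]$. Then there exists a partition of $[n]$ into $m < 2\sqrt{n}$ base sets $B_1,\dots,B_m$ such that for each $i$, either every color of $\P_1$ restricted to $B_i$ is a single color (i.e., $B_i$ is contained in one color of $\P_1$), or every color of $\P_1$ restricted to $B_i$ is a singleton (i.e., $B_i$ meets each color of $\P_1$ in at most one element). -/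
/-!
Let `s = ⌊√n⌋`. Every color of `P₁` with more than `s` elements is taken as a base set on its own;
there are fewer than `√n` of them since they are disjoint and each has more than `√n` elements.
The elements of the remaining colors are grouped by their rank inside their color; ranks are
below `s`, so this gives at most `s` base sets, and two elements of one color never share a rank.
-/

open Finset

namespace Finset

variable {α : Type*} [LinearOrder α] (s : Finset α)

def rank (x : α) : ℕ := #{y ∈ s | y < x}

variable {s}

theorem rank_lt_card {x : α} (hx : x ∈ s) : s.rank x < #s :=
  card_lt_card <| filter_ssubset.2 ⟨x, hx, lt_irrefl x⟩

theorem strictMonoOn_rank : StrictMonoOn s.rank s := by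
  intro x hx y _ hxy
  refine card_lt_card ⟨monotone_filter_right s fun z _ hz => hz.trans hxy, fun h => ?_⟩
  exact lt_irrefl x (mem_filter.1 (h (mem_filter.2 ⟨hx, hxy⟩))).2

end Finset

instance Setoid.decidableRelKer {α β : Type*} [DecidableEq β] (f : α → β) :
    DecidableRel (Setoid.ker f) :=
  fun a b => decEq (f a) (f b)

namespace Finpartition

theorem card_filter_lt_card_mul_le {α : Type*} [DecidableEq α] {t : Finset α}
    (P : Finpartition t) (s : ℕ) : #{X ∈ P.parts | s < #X} * (s + 1) ≤ #t := by
  calc #{X ∈ P.parts | s < #X} * (s + 1) ≤ ∑ X ∈ P.parts with s < #X, #X := by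
        simpa using card_nsmul_le_sum {X ∈ P.parts | s < #X} card (s + 1)
          fun X hX => (mem_filter.1 hX).2
    _ ≤ ∑ X ∈ P.parts, #X := sum_le_sum_of_subset (filter_subset _ _)
    _ = #t := P.sum_card_parts

variable {α β : Type*} [Fintype α] [DecidableEq α] [DecidableEq β] (f : α → β)

theorem card_parts_ofSetoid_ker_le :
    #(ofSetoid (Setoid.ker f)).parts ≤ #(univ.image f) := by
  rw [ofSetoid, ofSetSetoid_parts]
  have : (fun a => {b ∈ (univ : Finset α) | Setoid.ker f a b}) =
      (fun v => {b ∈ (univ : Finset α) | v = f b}) ∘ f := by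
    ext a b; simp [Setoid.ker_def]
  rw [this, ← image_image]
  exact card_image_le

theorem apply_eq_of_mem_part {B : Finset α} (hB : B ∈ (ofSetoid (Setoid.ker f)).parts)
    {a b : α} (ha : a ∈ B) (hb : b ∈ B) : f a = f b := by
  rw [← (ofSetoid (Setoid.ker f)).part_eq_of_mem hB ha, mem_part_ofSetoid_iff_rel] at hb
  exact hb

end Finpartition

theorem add_sqrt_lt_two_mul_sqrt {n k : ℕ} (hn : 0 < n) (hk : k * (n.sqrt + 1) ≤ n) :
    (k + n.sqrt : ℝ) < 2 * √n := by
  have hsqrt_pos : 0 < √(n : ℝ) := Real.sqrt_pos.2 (by exact_mod_cast hn)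
  have hsq : √(n : ℝ) * √n = n := Real.mul_self_sqrt n.cast_nonneg
  have hk' : (k : ℝ) * (n.sqrt + 1) ≤ n := by exact_mod_cast hk
  have hk_lt : (k : ℝ) < √n := by
    nlinarith [Real.real_sqrt_lt_nat_sqrt_succ (a := n)]
  linarith [Real.nat_sqrt_le_real_sqrt (a := n)]

section BasePartition

variable {α : Type*} [Fintype α] [LinearOrder α] (P : Finpartition (univ : Finset α)) (s : ℕ)

def baseKey (x : α) : Finset α ⊕ ℕ :=
  if s < #(P.part x) then .inl (P.part x) else .inr ((P.part x).rank x)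

def basePartition : Finpartition (univ : Finset α) :=
  Finpartition.ofSetoid (Setoid.ker (baseKey P s))

variable {P s}

theorem eq_part_of_baseKey_eq_inl {x : α} {X : Finset α} (h : baseKey P s x = .inl X) :
    X = P.part x := by
  unfold baseKey at h
  split_ifs at h
  exact (Sum.inl_injective h).symm

theorem eq_of_baseKey_eq_inr {a b : α} {r : ℕ} (ha : baseKey P s a = .inr r)
    (hb : baseKey P s b = .inr r) (hab : P.part a = P.part b) : a = b := by
  unfold baseKey at ha hb
  split_ifs at ha hb
  rw [hab] at ha
  exact strictMonoOn_rank.injOn (hab ▸ P.mem_part (mem_univ a))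
    (P.mem_part (mem_univ b)) (Sum.inr_injective (ha.trans hb.symm))

theorem image_baseKey_subset : univ.image (baseKey P s) ⊆
    {X ∈ P.parts | s < #X}.image Sum.inl ∪ (range s).image Sum.inr := by
  intro v hv
  obtain ⟨x, -, rfl⟩ := mem_image.1 hv
  have hx : x ∈ P.part x := P.mem_part (mem_univ x)
  unfold baseKey
  split_ifs with hlarge
  · exact mem_union_left _ <|
      mem_image_of_mem _ (mem_filter.2 ⟨P.part_mem.2 (mem_univ x), hlarge⟩)
  · exact mem_union_right _ <|
      mem_image_of_mem _ (mem_range.2 ((rank_lt_card hx).trans_le (not_lt.1 hlarge)))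

theorem card_parts_basePartition_le :
    #(basePartition P s).parts ≤ #{X ∈ P.parts | s < #X} + s :=
  calc #(basePartition P s).parts ≤ #(univ.image (baseKey P s)) :=
        Finpartition.card_parts_ofSetoid_ker_le _
    _ ≤ #({X ∈ P.parts | s < #X}.image Sum.inl ∪ (range s).image Sum.inr) :=
        card_le_card image_baseKey_subset
    _ ≤ #({X ∈ P.parts | s < #X}.image Sum.inl) + #((range s).image Sum.inr) := card_union_le _ _
    _ ≤ #{X ∈ P.parts | s < #X} + s := by
      gcongr
      · exact card_image_le
      · exact card_image_le.trans (card_range s).le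

theorem subset_or_card_inter_le_one {B : Finset α} (hB : B ∈ (basePartition P s).parts) :
    (∃ X ∈ P.parts, B ⊆ X) ∨ ∀ X ∈ P.parts, #(X ∩ B) ≤ 1 := by
  obtain ⟨x, hx⟩ := (basePartition P s).nonempty_of_mem_parts hB
  have hkey : ∀ b ∈ B, baseKey P s b = baseKey P s x := fun b hb =>
    Finpartition.apply_eq_of_mem_part _ hB hb hx
  cases h : baseKey P s x with
  | inl X =>
    refine .inl ⟨X, eq_part_of_baseKey_eq_inl h ▸ P.part_mem.2 (mem_univ x), fun b hb => ?_⟩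
    exact eq_part_of_baseKey_eq_inl ((hkey b hb).trans h) ▸ P.mem_part (mem_univ b)
  | inr r =>
    refine .inr fun X hX => card_le_one.2 fun a ha b hb => ?_
    rw [mem_inter] at ha hb
    exact eq_of_baseKey_eq_inr ((hkey a ha.2).trans h) ((hkey b hb.2).trans h)
      ((P.part_eq_of_mem hX ha.1).trans (P.part_eq_of_mem hX hb.1).symm)

end BasePartition

theorem stmt15_general (n : ℕ) (hn : 0 < n)
    (P₁ : Finpartition (Finset.univ : Finset (Fin n))) :
    ∃ B : Finpartition (Finset.univ : Finset (Fin n)),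
      (B.parts.card : ℝ) < 2 * Real.sqrt n ∧
      ∀ Bi ∈ B.parts,
        (∃ X ∈ P₁.parts, Bi ⊆ X) ∨ (∀ X ∈ P₁.parts, (X ∩ Bi).card ≤ 1) := by
  refine ⟨basePartition P₁ n.sqrt, ?_, fun _ => subset_or_card_inter_le_one⟩
  have hlarge := P₁.card_filter_lt_card_mul_le n.sqrt
  rw [card_univ, Fintype.card_fin] at hlarge
  calc (#(basePartition P₁ n.sqrt).parts : ℝ) ≤ #{X ∈ P₁.parts | n.sqrt < #X} + n.sqrt := by
        exact_mod_cast card_parts_basePartition_le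
    _ < 2 * √n := add_sqrt_lt_two_mul_sqrt hn hlarge

/-- For any two partitions `P₁, P₂` of `[n]` there is a partition of `[n]`
into fewer than `2√n` base sets such that each base set is either contained in
a single color of `P₁`, or meets every color of `P₁` in at most one element. -/
theorem stmt15 (n : ℕ) (hn : 0 < n)
    (P₁ P₂ : Finpartition (Finset.univ : Finset (Fin n))) :
    ∃ B : Finpartition (Finset.univ : Finset (Fin n)),
      (B.parts.card : ℝ) < 2 * Real.sqrt n ∧
      ∀ Bi ∈ B.parts,
        (∃ X ∈ P₁.parts, Bi ⊆ X) ∨ (∀ X ∈ P₁.parts, (X ∩ Bi).card ≤ 1) :=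
  stmt15_general n hn P₁
end

section
/- Let $D(\bar x) = \prod_{i=1}^d D_i(\bar x_i)$ be a product of polynomials over disjoint variable sets with coefficients in the matrix algebra $\mathbb{F}^{w\times w}$, where each constant term $D_{i\mathbf{0}}$ is invertible. Suppose the coefficient $D_e = \prod_i D_{ie_i}$ is an $\mathbb{F}$-linear combination of its descendants $\{D_f : \mathrm{bS}(f) \subset \mathrm{bS}(e)\}$, and let $D_{e^*}$ be a parent of $D_e$ obtained by replacing, at some index $j$ with $j > \max \mathrm{bS}(e)$ or $j < \min \mathrm{bS}(e)$, the constant factor $D_{j\mathbf{0}}$ by $D_{j e^*_j}$ with $e^*_j \ne \mathbf{0}$. Then $D_{e^*}$ is an $\mathbb{F}$-linear combination of its own descendants $\{D_g : \mathrm{bS}(g) \subset \mathrm{bS}(e^*)\}$. -/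
/-!
Because the constant terms `Dᵢ(0)` are invertible, for every `f` vanishing on the blocks from `j`
on we have `D_{f*} = D_f A⁻¹ B`, where `f* = update f j s` and `A`, `B` are the products of the
factors from block `j` on for the exponents `0` and `update 0 j s`; neither depends on `f`. So right
multiplication by `A⁻¹ B` (left multiplication by `B A⁻¹` when `j` lies left of the support) is one
linear map sending `D_e` to `D_{e*}` and each descendant `D_f` of `D_e` to `D_{f*}`, which is a
descendant of `D_{e*}` because `j ∉ bS(e)`.
-/

open Function

theorem Finset.insert_ssubset_insert_of_notMem {α : Type*} [DecidableEq α] {s t : Finset α}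
    {a : α} (hst : s ⊂ t) (ha : a ∉ t) : insert a s ⊂ insert a t := by
  refine (Finset.insert_subset_insert a hst.subset).ssubset_of_ne fun heq => hst.ne ?_
  rw [← Finset.erase_insert (fun has => ha (hst.subset has)), heq, Finset.erase_insert ha]

theorem List.mem_take_finRange {d k : ℕ} (i : Fin d) :
    i ∈ (List.finRange d).take k ↔ (i : ℕ) < k := by
  simp only [List.mem_take_iff_getElem, List.getElem_finRange, List.length_finRange]
  constructor
  · rintro ⟨m, hm, rfl⟩
    simp only [Fin.cast, Fin.val_mk]
    omega
  · exact fun hi => ⟨i, by omega, rfl⟩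

theorem List.mem_drop_finRange {d k : ℕ} (i : Fin d) :
    i ∈ (List.finRange d).drop k ↔ k ≤ (i : ℕ) := by
  simp only [List.mem_drop_iff_getElem, List.getElem_finRange, List.length_finRange]
  constructor
  · rintro ⟨m, hm, rfl⟩
    simp only [Fin.cast, Fin.val_mk]
    omega
  · exact fun hi => ⟨i - k, by omega, Fin.ext (by simp only [Fin.cast, Fin.val_mk]; omega)⟩

namespace BlockProduct

variable {d : ℕ} {σ : Fin d → Type*} {R : Type*}

section Monoid

variable [Monoid R]

def coeffOn (D : ∀ i, σ i → R) (l : List (Fin d)) (f : ∀ i, σ i) : R :=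
  (l.map fun i => D i (f i)).prod

def coeff (D : ∀ i, σ i → R) (f : ∀ i, σ i) : R :=
  coeffOn D (List.finRange d) f

variable {D : ∀ i, σ i → R}

theorem coeffOn_congr {l : List (Fin d)} {f g : ∀ i, σ i} (h : ∀ i ∈ l, f i = g i) :
    coeffOn D l f = coeffOn D l g :=
  congrArg List.prod (List.map_congr_left fun i hi => by rw [h i hi])

theorem coeff_eq_coeffOn_take_mul_coeffOn_drop (f : ∀ i, σ i) (k : ℕ) :
    coeff D f =
      coeffOn D ((List.finRange d).take k) f * coeffOn D ((List.finRange d).drop k) f := by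
  rw [coeff, coeffOn, coeffOn, coeffOn, List.map_take, List.map_drop,
    List.prod_take_mul_prod_drop]

theorem isUnit_coeffOn_zero [∀ i, Zero (σ i)] (hD : ∀ i, IsUnit (D i 0)) (l : List (Fin d)) :
    IsUnit (coeffOn D l 0) :=
  List.prod_isUnit fun _ hx => by
    obtain ⟨i, -, rfl⟩ := List.mem_map.mp hx
    exact hD i

theorem update_apply_eq_update_zero_apply [∀ i, Zero (σ i)] {f : ∀ i, σ i} {j i : Fin d}
    (s : σ j) (hfi : i ≠ j → f i = 0) : update f j s i = update (0 : ∀ i, σ i) j s i := by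
  rcases eq_or_ne i j with rfl | hij
  · simp only [update_self]
  · rw [update_of_ne hij, update_of_ne hij, hfi hij, Pi.zero_apply]

theorem exists_coeff_update_eq_coeff_mul [∀ i, Zero (σ i)] (hD : ∀ i, IsUnit (D i 0)) (j : Fin d)
    (s : σ j) : ∃ m : R, ∀ f : ∀ i, σ i, (∀ i, j ≤ i → f i = 0) →
      coeff D (update f j s) = coeff D f * m := by
  set tail := (List.finRange d).drop j
  obtain ⟨u, hu⟩ := isUnit_coeffOn_zero hD tail
  refine ⟨↑u⁻¹ * coeffOn D tail (update 0 j s), fun f hf => ?_⟩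
  have hhead : coeffOn D ((List.finRange d).take j) (update f j s) =
      coeffOn D ((List.finRange d).take j) f :=
    coeffOn_congr fun i hi =>
      update_of_ne (Fin.ne_of_lt ((List.mem_take_finRange i).mp hi)) s f
  have htail : coeffOn D tail f = u :=
    hu ▸ coeffOn_congr fun i hi => hf i ((List.mem_drop_finRange i).mp hi)
  have htail_update : coeffOn D tail (update f j s) = coeffOn D tail (update 0 j s) :=
    coeffOn_congr fun i hi =>
      update_apply_eq_update_zero_apply s fun _ => hf i ((List.mem_drop_finRange i).mp hi)
  rw [coeff_eq_coeffOn_take_mul_coeffOn_drop _ j, coeff_eq_coeffOn_take_mul_coeffOn_drop _ j,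
    hhead, htail_update, htail, mul_assoc, Units.mul_inv_cancel_left]

theorem exists_coeff_update_eq_mul_coeff [∀ i, Zero (σ i)] (hD : ∀ i, IsUnit (D i 0))
    (j : Fin d) (s : σ j) : ∃ m : R, ∀ f : ∀ i, σ i, (∀ i, i ≤ j → f i = 0) →
      coeff D (update f j s) = m * coeff D f := by
  set head := (List.finRange d).take (j + 1)
  obtain ⟨u, hu⟩ := isUnit_coeffOn_zero hD head
  refine ⟨coeffOn D head (update 0 j s) * ↑u⁻¹, fun f hf => ?_⟩
  have hf' : ∀ i ∈ head, f i = 0 := fun i hi =>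
    hf i (Nat.lt_succ_iff.mp ((List.mem_take_finRange i).mp hi))
  have hhead : coeffOn D head f = u := hu ▸ coeffOn_congr hf'
  have hhead_update : coeffOn D head (update f j s) = coeffOn D head (update 0 j s) :=
    coeffOn_congr fun i hi => update_apply_eq_update_zero_apply s fun _ => hf' i hi
  have htail : coeffOn D ((List.finRange d).drop (j + 1)) (update f j s) =
      coeffOn D ((List.finRange d).drop (j + 1)) f :=
    coeffOn_congr fun i hi =>
      update_of_ne (Fin.ne_of_gt (Nat.lt_of_succ_le ((List.mem_drop_finRange i).mp hi))) s f
  rw [coeff_eq_coeffOn_take_mul_coeffOn_drop _ (j + 1),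
    coeff_eq_coeffOn_take_mul_coeffOn_drop _ (j + 1), hhead_update, htail, hhead, mul_assoc,
    Units.inv_mul_cancel_left]

end Monoid

section Descendants

variable [∀ i, Zero (σ i)] [∀ i, DecidableEq (σ i)]

def blockSupport (f : ∀ i, σ i) : Finset (Fin d) :=
  Finset.univ.filter fun i => f i ≠ 0

theorem mem_blockSupport {f : ∀ i, σ i} {i : Fin d} : i ∈ blockSupport f ↔ f i ≠ 0 := by
  simp [blockSupport]

theorem eq_zero_of_blockSupport_subset {f e : ∀ i, σ i} (h : blockSupport f ⊆ blockSupport e)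
    {i : Fin d} (hei : e i = 0) : f i = 0 :=
  not_not.mp fun hfi => mem_blockSupport.mp (h (mem_blockSupport.mpr hfi)) hei

theorem blockSupport_update {f : ∀ i, σ i} {j : Fin d} {s : σ j} (hs : s ≠ 0) :
    blockSupport (update f j s) = insert j (blockSupport f) := by
  ext i
  rcases eq_or_ne i j with rfl | hij
  · simp [mem_blockSupport, hs]
  · simp [mem_blockSupport, hij]

def descendants [Monoid R] (D : ∀ i, σ i → R) (e : ∀ i, σ i) : Set R :=
  {v | ∃ f, blockSupport f ⊂ blockSupport e ∧ v = coeff D f}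

theorem coeff_update_mem_span_descendants {F : Type*} [CommSemiring F] [Semiring R] [Algebra F R]
    {D : ∀ i, σ i → R} {e : ∀ i, σ i} {j : Fin d} {s : σ j} (hs : s ≠ 0) (hej : e j = 0)
    (g : R →ₗ[F] R)
    (hg : ∀ f, blockSupport f ⊆ blockSupport e → coeff D (update f j s) = g (coeff D f))
    (hdep : coeff D e ∈ Submodule.span F (descendants D e)) :
    coeff D (update e j s) ∈ Submodule.span F (descendants D (update e j s)) := by
  have hj : j ∉ blockSupport e := fun h => mem_blockSupport.mp h hej
  rw [hg e subset_rfl]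
  have hmap := Submodule.mem_map_of_mem (f := g) hdep
  rw [Submodule.map_span] at hmap
  refine Submodule.span_mono ?_ hmap
  rintro _ ⟨_, ⟨f, hfe, rfl⟩, rfl⟩
  refine ⟨update f j s, ?_, (hg f hfe.subset).symm⟩
  rw [blockSupport_update hs, blockSupport_update hs]
  exact Finset.insert_ssubset_insert_of_notMem hfe hj

end Descendants

end BlockProduct

open BlockProduct in
/-- Lifting a dependence from a child to its parent: with disjoint variable
blocks and invertible constant terms `Dᵢ(0)`, if the coefficient
`D_e = ∏ᵢ Dᵢ(eᵢ)` is a linear combination of its descendants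
(coefficients with strictly smaller block support), and `e*` is a parent of
`e` obtained by replacing the constant factor at an index `j` lying entirely
to the right (or entirely to the left) of the block support of `e` by a
nonconstant term, then `D_{e*}` is a linear combination of its own
descendants. -/
theorem stmt19 {F : Type*} [Field F] (w d : ℕ) (n : Fin d → ℕ)
    (Di : ∀ i : Fin d, ((Fin (n i)) →₀ ℕ) → Matrix (Fin w) (Fin w) F)
    (hinv : ∀ i, IsUnit (Di i 0))
    (e estar : ∀ i : Fin d, (Fin (n i)) →₀ ℕ)
    (j : Fin d) (hj : estar j ≠ 0) (hje : e j = 0)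
    (hagree : ∀ i, i ≠ j → estar i = e i)
    (hside : (∀ i, e i ≠ 0 → i < j) ∨ (∀ i, e i ≠ 0 → j < i))
    (hdep : (((List.finRange d).map (fun i => Di i (e i))).prod) ∈
      Submodule.span F {v : Matrix (Fin w) (Fin w) F |
        ∃ f : ∀ i : Fin d, (Fin (n i)) →₀ ℕ,
          (Finset.univ.filter (fun i => f i ≠ 0)) ⊂
            (Finset.univ.filter (fun i => e i ≠ 0)) ∧
          v = ((List.finRange d).map (fun i => Di i (f i))).prod}) :
    (((List.finRange d).map (fun i => Di i (estar i))).prod) ∈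
      Submodule.span F {v : Matrix (Fin w) (Fin w) F |
        ∃ g : ∀ i : Fin d, (Fin (n i)) →₀ ℕ,
          (Finset.univ.filter (fun i => g i ≠ 0)) ⊂
            (Finset.univ.filter (fun i => estar i ≠ 0)) ∧
          v = ((List.finRange d).map (fun i => Di i (g i))).prod} := by
  show coeff Di estar ∈ Submodule.span F (descendants Di estar)
  have hestar : estar = update e j (estar j) := eq_update_iff.mpr ⟨rfl, hagree⟩
  rw [hestar]
  rcases hside with hright | hleft
  · obtain ⟨m, hm⟩ := exists_coeff_update_eq_coeff_mul hinv j (estar j)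
    refine coeff_update_mem_span_descendants hj hje (LinearMap.mulRight F m) (fun f hfe => ?_) hdep
    exact hm f fun i hji => eq_zero_of_blockSupport_subset hfe
      (not_not.mp fun hei => (hright i hei).not_ge hji)
  · obtain ⟨m, hm⟩ := exists_coeff_update_eq_mul_coeff hinv j (estar j)
    refine coeff_update_mem_span_descendants hj hje (LinearMap.mulLeft F m) (fun f hfe => ?_) hdep
    exact hm f fun i hij => eq_zero_of_blockSupport_subset hfe
      (not_not.mp fun hei => (hleft i hei).not_ge hij)
end
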